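/- arXiv:2512.15352 — 2 statements merged into one kernel-verified Lean document; each statement's English description precedes it below -/
import Mathlib

section
/- Let H be a complex inner product space, let k and k⊥ be orthonormal vectors in H, let θ ∈ ℝ, and let ψ = cos θ • k + sin θ • k⊥. Let Q = V_ψ ∘ V_k be the Grover operator, where V_k = id − 2 P_k and V_ψ = id − 2 P_ψ. Then for every natural number m, the probability of detecting coherence after m Grover iterations satisfies ‖(id − P_k)(Q^m ψ)‖² = sin²((2m+1)θ). -/
/-!
In the orthonormal plane spanned by `k` and `k⊥`, write `c(α) = cos α • k + sin α • k⊥`, so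
that `ψ = c(θ)` and `k = c(0)`. On this circle `x ↦ x - 2⟪c(φ), x⟫ c(φ)` acts as
`c(α) ↦ c(π + 2φ - α)`, so `Q = V_ψ ∘ V_k` acts as the rotation `c(α) ↦ c(α + 2θ)` and
`Q^m ψ = c((2m+1)θ)`. The component of `c(β)` orthogonal to `k` is `sin β • k⊥`.
-/

open scoped ComplexInnerProductSpace

namespace Grover

variable {H : Type*} [NormedAddCommGroup H] [InnerProductSpace ℂ H]

noncomputable def circleVec (k kp : H) (α : ℝ) : H :=
  (Real.cos α : ℂ) • k + (Real.sin α : ℂ) • kp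

@[simp]
theorem circleVec_zero (k kp : H) : circleVec k kp 0 = k := by
  simp [circleVec]

theorem iterate_apply_circleVec {k kp : H} {f : H → H} {φ : ℝ}
    (hf : ∀ α, f (circleVec k kp α) = circleVec k kp (α + φ)) (m : ℕ) (α : ℝ) :
    f^[m] (circleVec k kp α) = circleVec k kp (α + m * φ) := by
  have hsemiconj : Function.Semiconj (circleVec k kp) (· + φ) f := fun α ↦ (hf α).symm
  rw [← hsemiconj.iterate_right m α, add_right_iterate_apply, nsmul_eq_mul]

section Orthonormal

variable {k kp : H} (hk : ‖k‖ = 1) (hkp : ‖kp‖ = 1) (hortho : ⟪k, kp⟫ = 0)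
include hk hkp hortho

theorem inner_circleVec_circleVec (β α : ℝ) :
    ⟪circleVec k kp β, circleVec k kp α⟫ = (Real.cos (α - β) : ℂ) := by
  have hkk : ⟪k, k⟫ = 1 := by simp [inner_self_eq_norm_sq_to_K, hk]
  have hpp : ⟪kp, kp⟫ = 1 := by simp [inner_self_eq_norm_sq_to_K, hkp]
  have hpk : ⟪kp, k⟫ = 0 := by rw [← inner_conj_symm, hortho, map_zero]
  simp only [circleVec, inner_add_left, inner_add_right, inner_smul_left, inner_smul_right,
    hkk, hpp, hortho, hpk, Complex.conj_ofReal, Real.cos_sub]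
  push_cast
  ring

theorem circleVec_sub_two_smul_inner_smul (φ α : ℝ) :
    circleVec k kp α
        - (2 : ℂ) • (⟪circleVec k kp φ, circleVec k kp α⟫ • circleVec k kp φ) =
      circleVec k kp (Real.pi + 2 * φ - α) := by
  rw [inner_circleVec_circleVec hk hkp hortho]
  have hcos : Real.cos (Real.pi + 2 * φ - α)
      = Real.cos α - 2 * Real.cos (α - φ) * Real.cos φ := by
    simp only [add_sub_assoc, Real.cos_add, Real.cos_pi, Real.sin_pi, Real.cos_sub, Real.sin_sub,
      Real.cos_two_mul, Real.sin_two_mul]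
    ring
  have hsin : Real.sin (Real.pi + 2 * φ - α)
      = Real.sin α - 2 * Real.cos (α - φ) * Real.sin φ := by
    simp only [add_sub_assoc, Real.sin_add, Real.cos_pi, Real.sin_pi, Real.cos_sub, Real.sin_sub,
      Real.cos_two_mul, Real.sin_two_mul]
    linear_combination (2 * Real.sin α) * Real.sin_sq_add_cos_sq φ
  simp only [circleVec, hcos, hsin]
  push_cast
  module

theorem norm_circleVec_sub_inner_smul_sq (β : ℝ) :
    ‖circleVec k kp β - ⟪k, circleVec k kp β⟫ • k‖ ^ 2 = Real.sin β ^ 2 := by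
  have hinner := inner_circleVec_circleVec hk hkp hortho 0 β
  rw [circleVec_zero, sub_zero] at hinner
  rw [hinner, circleVec, add_sub_cancel_left, norm_smul, hkp, mul_one, Complex.norm_real,
    Real.norm_eq_abs, sq_abs]

end Orthonormal

end Grover

open Grover in
/-- The probability of detecting coherence after `m` Grover iterations, i.e. the
squared norm of the component of `Q^[m] ψ` orthogonal to `k`, equals `sin²((2m+1)θ)`. -/
theorem grover_detection_probability
    {H : Type*} [NormedAddCommGroup H] [InnerProductSpace ℂ H]
    (k kp : H) (hk : ‖k‖ = 1) (hkp : ‖kp‖ = 1) (hortho : ⟪k, kp⟫ = 0)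
    (θ : ℝ) (ψ : H)
    (hψ : ψ = (Real.cos θ : ℂ) • k + (Real.sin θ : ℂ) • kp)
    (Pk Pψ Vk Vψ Q : H → H)
    (hPk : ∀ x, Pk x = ⟪k, x⟫ • k)
    (hPψ : ∀ x, Pψ x = ⟪ψ, x⟫ • ψ)
    (hVk : ∀ x, Vk x = x - (2 : ℂ) • Pk x)
    (hVψ : ∀ x, Vψ x = x - (2 : ℂ) • Pψ x)
    (hQ : Q = Vψ ∘ Vk) (m : ℕ) :
    ‖Q^[m] ψ - Pk (Q^[m] ψ)‖ ^ 2 = Real.sin ((2 * m + 1) * θ) ^ 2 := by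
  change ψ = circleVec k kp θ at hψ
  have hVk_circle (α : ℝ) : Vk (circleVec k kp α) = circleVec k kp (Real.pi - α) := by
    simpa only [hVk, hPk, circleVec_zero, mul_zero, add_zero]
      using circleVec_sub_two_smul_inner_smul hk hkp hortho 0 α
  have hVψ_circle (α : ℝ) :
      Vψ (circleVec k kp α) = circleVec k kp (Real.pi + 2 * θ - α) := by
    simpa only [hVψ, hPψ, hψ] using circleVec_sub_two_smul_inner_smul hk hkp hortho θ α
  have hQ_rotation (α : ℝ) : Q (circleVec k kp α) = circleVec k kp (α + 2 * θ) := by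
    rw [hQ, Function.comp_apply, hVk_circle, hVψ_circle]
    ring_nf
  rw [hPk, hψ, iterate_apply_circleVec hQ_rotation,
    norm_circleVec_sub_inner_smul_sq hk hkp hortho]
  ring_nf
end

section
/- Let d be a positive natural number, let p : Fin d → ℝ be a probability distribution (p j ≥ 0 for all j and ∑_j p j = 1), let k_max be an index at which p attains its maximum, and set c = 1 − p k_max, assuming c > 0. Then ∑_{k : Fin d} p k / √(1 − p k) ≤ 1/√c + 1 + √2. -/
/-!
The largest entry contributes `p kmax / √c ≤ 1 / √c`. Every other entry is at most `1 / 2`,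
hence contributes at most `√2 · p k`, and these contributions add up to `√2 · c ≤ √2`.
-/

open Finset Real

lemma div_sqrt_one_sub_le_sqrt_two_mul {x : ℝ} (hx0 : 0 ≤ x) (hx : x ≤ 1 / 2) :
    x / √(1 - x) ≤ √2 * x := by
  have hpos : 0 < √(1 - x) := sqrt_pos.mpr (by linarith)
  rw [div_le_iff₀ hpos]
  calc x = x * 1 := (mul_one x).symm
    _ ≤ x * √(2 * (1 - x)) := by gcongr; exact one_le_sqrt.mpr (by linarith)
    _ = √2 * x * √(1 - x) := by rw [sqrt_mul zero_le_two]; ring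

lemma le_one_half_of_ne_of_le {ι : Type*} [Fintype ι] {p : ι → ℝ} (hp0 : ∀ j, 0 ≤ p j)
    (hp1 : ∑ j, p j = 1) {i j : ι} (hji : j ≠ i) (hle : p j ≤ p i) : p j ≤ 1 / 2 := by
  classical
  have hpair : p j + p i ≤ 1 := by
    rw [← hp1, ← sum_pair hji]
    exact sum_le_univ_sum_of_nonneg hp0
  linarith

theorem total_oracle_calls_bound_general
    (d : ℕ) (p : Fin d → ℝ)
    (hp0 : ∀ j, 0 ≤ p j) (hp1 : ∑ j : Fin d, p j = 1)
    (kmax : Fin d) (hmax : ∀ j, p j ≤ p kmax)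
    (c : ℝ) (hc : c = 1 - p kmax) :
    ∑ k : Fin d, p k / Real.sqrt (1 - p k)
      ≤ 1 / Real.sqrt c + 1 + Real.sqrt 2 := by
  subst hc
  have hmax_le_one : p kmax ≤ 1 := hp1 ▸ single_le_sum (fun j _ => hp0 j) (mem_univ kmax)
  have hmax_term : p kmax / √(1 - p kmax) ≤ 1 / √(1 - p kmax) :=
    div_le_div_of_nonneg_right hmax_le_one (sqrt_nonneg _)
  have hrest : ∑ k ∈ univ.erase kmax, p k / √(1 - p k) ≤ √2 * (1 - p kmax) := by
    have hsum_erase : ∑ k ∈ univ.erase kmax, p k = 1 - p kmax := by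
      rw [sum_erase_eq_sub (mem_univ kmax), hp1]
    rw [← hsum_erase, mul_sum]
    exact sum_le_sum fun k hk => div_sqrt_one_sub_le_sqrt_two_mul (hp0 k)
      (le_one_half_of_ne_of_le hp0 hp1 (ne_of_mem_erase hk) (hmax k))
  have hrest_le : √2 * (1 - p kmax) ≤ √2 :=
    mul_le_of_le_one_right (sqrt_nonneg 2) (by linarith [hp0 kmax])
  rw [← add_sum_erase univ _ (mem_univ kmax)]
  linarith

/-- Expected oracle-call count of amplitude-amplified coherence detection:
`∑_k p k / √(1 − p k) ≤ 1/√c + 1 + √2` where `c = 1 − p k_max` is the geometric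
measure of coherence. -/
theorem total_oracle_calls_bound
    (d : ℕ) (hd : 0 < d) (p : Fin d → ℝ)
    (hp0 : ∀ j, 0 ≤ p j) (hp1 : ∑ j : Fin d, p j = 1)
    (kmax : Fin d) (hmax : ∀ j, p j ≤ p kmax)
    (c : ℝ) (hc : c = 1 - p kmax) (hc0 : 0 < c) :
    ∑ k : Fin d, p k / Real.sqrt (1 - p k)
      ≤ 1 / Real.sqrt c + 1 + Real.sqrt 2 :=
  total_oracle_calls_bound_general d p hp0 hp1 kmax hmax c hc
end
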